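/- The following hold for the single-beam equation on an elastic foundation. (i) Every solution is a linear combination of at most two of the eigenfunctions e_n: if u is a solution, then there exist positive integers n₁ < n₂ and reals x, y with u(t) = x·e_{n₁}(t) + y·e_{n₂}(t) for all t ∈ [0,1]. (ii) For a positive integer n and a nonzero real α, the function u = α·e_n is a solution if and only if k/λ_n + λ_n < −β and α² = (−β − k/λ_n − λ_n)/(ϱ·λ_n). (iii) For positive integers n₁ < n₂ and nonzero reals x, y, the function u = x·e_{n₁} + y·e_{n₂} is a solution if and only if λ_{n₁}·λ_{n₂} = k and ϱ·x²·λ_{n₁} + ϱ·y²·λ_{n₂} + λ_{n₁} + λ_{n₂} + β = 0. -/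

import Mathlib

open Real Set

noncomputable def ee (n : ℕ) : ℝ → ℝ := fun x => Real.sqrt 2 * Real.sin (n * Real.pi * x)

noncomputable def lam (n : ℕ) : ℝ := (n : ℝ) ^ 2 * Real.pi ^ 2

noncomputable def energy (u : ℝ → ℝ) : ℝ := ∫ s in (0:ℝ)..1, (deriv u s) ^ 2

/-- `u` is a solution of the single-beam equation on an elastic foundation. -/
def SBSol (β ϱ k : ℝ) (u : ℝ → ℝ) : Prop :=
  ContDiff ℝ 4 u ∧
  (∀ x ∈ Set.Icc (0:ℝ) 1,
    iteratedDeriv 4 u x - (β + ϱ * energy u) * iteratedDeriv 2 u x + k * u x = 0) ∧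
  u 0 = 0 ∧ u 1 = 0 ∧ iteratedDeriv 2 u 0 = 0 ∧ iteratedDeriv 2 u 1 = 0

open MeasureTheory intervalIntegral

noncomputable def ee' (n : ℕ) : ℝ → ℝ := fun x => Real.sqrt 2 * ((n * Real.pi) * Real.cos (n * Real.pi * x))

lemma hasDerivAt_ee (n : ℕ) (x : ℝ) : HasDerivAt (ee n) (ee' n x) x := by
  have h : HasDerivAt (fun y : ℝ => (n : ℝ) * Real.pi * y) ((n : ℝ) * Real.pi) x := by
    simpa using (hasDerivAt_id x).const_mul ((n : ℝ) * Real.pi)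
  have h2 := ((Real.hasDerivAt_sin ((n:ℝ) * Real.pi * x)).comp x h).const_mul (Real.sqrt 2)
  have e : ee' n x = √2 * (Real.cos (↑n * π * x) * (↑n * π)) := by simp only [ee']; ring
  rw [e]; exact h2

lemma hasDerivAt_ee' (n : ℕ) (x : ℝ) : HasDerivAt (ee' n) (-lam n * ee n x) x := by
  have h : HasDerivAt (fun y : ℝ => (n : ℝ) * Real.pi * y) ((n : ℝ) * Real.pi) x := by
    simpa using (hasDerivAt_id x).const_mul ((n : ℝ) * Real.pi)
  have := (((Real.hasDerivAt_cos ((n:ℝ) * Real.pi * x)).comp x h).const_mul ((n:ℝ) * Real.pi)).const_mul (Real.sqrt 2)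
  have e : -lam n * ee n x = √2 * (↑n * π * (-Real.sin (↑n * π * x) * (↑n * π))) := by simp only [lam, ee]; ring
  rw [e]; exact this

lemma ee_contDiff (n : ℕ) : ContDiff ℝ 4 (ee n) := by
  exact (contDiff_const.mul ((Real.contDiff_sin.of_le le_top).comp
    ((contDiff_id.const_smul ((n:ℝ) * Real.pi)).of_le le_top : ContDiff ℝ 4 fun y : ℝ => ((n:ℝ) * Real.pi) • y)))

lemma ee_zero (n : ℕ) : ee n 0 = 0 := by simp [ee]

lemma ee_one (n : ℕ) : ee n 1 = 0 := by simp [ee, Real.sin_nat_mul_pi]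

lemma lam_pos {n : ℕ} (hn : 0 < n) : 0 < lam n := by
  have h1 := Real.pi_pos
  have h2 : (0:ℝ) < (n:ℝ) := by exact_mod_cast hn
  rw [lam]
  positivity

lemma lam_inj {m n : ℕ} (h : lam m = lam n) : m = n := by
  have hπ := Real.pi_pos
  have : (m:ℝ)^2 = (n:ℝ)^2 := by
    have h2 : (0:ℝ) < Real.pi ^ 2 := by positivity
    have hl : (m:ℝ)^2 * Real.pi^2 = (n:ℝ)^2 * Real.pi^2 := h
    nlinarith [hl]
  have : (m:ℝ) = n := by nlinarith [Nat.cast_nonneg (α := ℝ) m, Nat.cast_nonneg (α := ℝ) n]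
  exact_mod_cast this

lemma integral_cos_int (j : ℤ) (hj : j ≠ 0) : ∫ t in (0:ℝ)..1, Real.cos ((j:ℝ) * π * t) = 0 := by
  have hj' : (j:ℝ) ≠ 0 := Int.cast_ne_zero.mpr hj
  have hc : ((j:ℝ) * π) ≠ 0 := mul_ne_zero hj' Real.pi_ne_zero
  have h1 : ∫ t in (0:ℝ)..1, Real.cos ((j:ℝ) * π * t) = ((j:ℝ)*π)⁻¹ • ∫ x in ((j:ℝ)*π*0)..((j:ℝ)*π*1), Real.cos x := by
    simpa [mul_assoc] using intervalIntegral.integral_comp_mul_left (a := (0:ℝ)) (b := 1) Real.cos hc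
  rw [h1]
  rw [integral_cos]
  simp [Real.sin_int_mul_pi]

lemma integral_sinsin (a b : ℕ) (ha : 0 < a) (hb : 0 < b) :
    ∫ t in (0:ℝ)..1, Real.sin ((a:ℝ)*π*t) * Real.sin ((b:ℝ)*π*t) = if a = b then 1/2 else 0 := by
  have key : ∀ t : ℝ, Real.sin ((a:ℝ)*π*t) * Real.sin ((b:ℝ)*π*t)
      = (Real.cos ((((a:ℤ) - b : ℤ) : ℝ) * π * t) - Real.cos ((((a:ℤ) + b : ℤ) : ℝ) * π * t))/2 := by
    intro t
    have e1 : (((a:ℤ) - b : ℤ) : ℝ) * π * t = (a:ℝ)*π*t - (b:ℝ)*π*t := by push_cast; ring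
    have e2 : (((a:ℤ) + b : ℤ) : ℝ) * π * t = (a:ℝ)*π*t + (b:ℝ)*π*t := by push_cast; ring
    rw [e1, e2, Real.cos_sub, Real.cos_add]; ring
  have hcont : ∀ c : ℝ, Continuous fun t : ℝ => Real.cos (c * π * t) :=
    fun c => Real.continuous_cos.comp (by continuity)
  have h2 : ∫ t in (0:ℝ)..1, Real.sin ((a:ℝ)*π*t) * Real.sin ((b:ℝ)*π*t)
      = ((∫ t in (0:ℝ)..1, Real.cos ((((a:ℤ) - b : ℤ) : ℝ) * π * t))
        - ∫ t in (0:ℝ)..1, Real.cos ((((a:ℤ) + b : ℤ) : ℝ) * π * t))/2 := by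
    rw [intervalIntegral.integral_congr (g := fun t => (Real.cos ((((a:ℤ) - b : ℤ) : ℝ) * π * t) - Real.cos ((((a:ℤ) + b : ℤ) : ℝ) * π * t))/2) (fun t _ => key t)]
    rw [intervalIntegral.integral_div, intervalIntegral.integral_sub
      ((hcont _).intervalIntegrable _ _) ((hcont _).intervalIntegrable _ _)]
  rw [h2]
  have hab : ((a:ℤ) + b) ≠ 0 := by positivity
  rw [integral_cos_int _ hab]
  by_cases h : a = b
  · subst h
    simp
  · have : ((a:ℤ) - b) ≠ 0 := sub_ne_zero.mpr (by exact_mod_cast h)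
    rw [integral_cos_int _ this]
    simp [h]

lemma integral_coscos (a b : ℕ) (ha : 0 < a) (hb : 0 < b) :
    ∫ t in (0:ℝ)..1, Real.cos ((a:ℝ)*π*t) * Real.cos ((b:ℝ)*π*t) = if a = b then 1/2 else 0 := by
  have key : ∀ t : ℝ, Real.cos ((a:ℝ)*π*t) * Real.cos ((b:ℝ)*π*t)
      = (Real.cos ((((a:ℤ) - b : ℤ) : ℝ) * π * t) + Real.cos ((((a:ℤ) + b : ℤ) : ℝ) * π * t))/2 := by
    intro t
    have e1 : (((a:ℤ) - b : ℤ) : ℝ) * π * t = (a:ℝ)*π*t - (b:ℝ)*π*t := by push_cast; ring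
    have e2 : (((a:ℤ) + b : ℤ) : ℝ) * π * t = (a:ℝ)*π*t + (b:ℝ)*π*t := by push_cast; ring
    rw [e1, e2, Real.cos_sub, Real.cos_add]; ring
  have hcont : ∀ c : ℝ, Continuous fun t : ℝ => Real.cos (c * π * t) :=
    fun c => Real.continuous_cos.comp (by continuity)
  have h2 : ∫ t in (0:ℝ)..1, Real.cos ((a:ℝ)*π*t) * Real.cos ((b:ℝ)*π*t)
      = ((∫ t in (0:ℝ)..1, Real.cos ((((a:ℤ) - b : ℤ) : ℝ) * π * t))
        + ∫ t in (0:ℝ)..1, Real.cos ((((a:ℤ) + b : ℤ) : ℝ) * π * t))/2 := by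
    rw [intervalIntegral.integral_congr (g := fun t => (Real.cos ((((a:ℤ) - b : ℤ) : ℝ) * π * t) + Real.cos ((((a:ℤ) + b : ℤ) : ℝ) * π * t))/2) (fun t _ => key t)]
    rw [intervalIntegral.integral_div, intervalIntegral.integral_add
      ((hcont _).intervalIntegrable _ _) ((hcont _).intervalIntegrable _ _)]
  rw [h2]
  have hab : ((a:ℤ) + b) ≠ 0 := by positivity
  rw [integral_cos_int _ hab]
  by_cases h : a = b
  · subst h
    simp
  · have : ((a:ℤ) - b) ≠ 0 := sub_ne_zero.mpr (by exact_mod_cast h)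
    rw [integral_cos_int _ this]
    simp [h]

lemma integral_ee_ee (m n : ℕ) (hm : 0 < m) (hn : 0 < n) :
    ∫ t in (0:ℝ)..1, ee m t * ee n t = if m = n then 1 else 0 := by
  have : ∀ t : ℝ, ee m t * ee n t = 2 * (Real.sin ((m:ℝ)*π*t) * Real.sin ((n:ℝ)*π*t)) := by
    intro t
    have : Real.sqrt 2 * Real.sqrt 2 = 2 := Real.mul_self_sqrt (by norm_num)
    have h2 : Real.sqrt 2 * Real.sqrt 2 = 2 := Real.mul_self_sqrt (by norm_num)
    simp only [ee]
    calc Real.sqrt 2 * Real.sin ((m:ℝ) * π * t) * (Real.sqrt 2 * Real.sin ((n:ℝ) * π * t))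
        = (Real.sqrt 2 * Real.sqrt 2) * (Real.sin ((m:ℝ)*π*t) * Real.sin ((n:ℝ)*π*t)) := by ring
      _ = 2 * (Real.sin ((m:ℝ)*π*t) * Real.sin ((n:ℝ)*π*t)) := by rw [h2]
  rw [intervalIntegral.integral_congr (g := fun t => 2 * (Real.sin ((m:ℝ)*π*t) * Real.sin ((n:ℝ)*π*t))) (fun t _ => this t)]
  rw [intervalIntegral.integral_const_mul, integral_sinsin m n hm hn]
  by_cases h : m = n <;> simp [h]


lemma ee_cont (n : ℕ) : Continuous (ee n) :=
  continuous_const.mul (Real.continuous_sin.comp (by continuity))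

lemma iteratedDeriv_two (f : ℝ → ℝ) : iteratedDeriv 2 f = deriv (deriv f) := by
  rw [show (2:ℕ) = 1 + 1 from rfl, iteratedDeriv_succ, iteratedDeriv_one]

lemma iteratedDeriv_four (f : ℝ → ℝ) : iteratedDeriv 4 f = iteratedDeriv 2 (iteratedDeriv 2 f) := by
  rw [show (4:ℕ) = 2 + 1 + 1 from rfl, iteratedDeriv_succ, iteratedDeriv_succ, iteratedDeriv_two]
  rw [show (2:ℕ) = 1 + 1 from rfl, iteratedDeriv_succ, iteratedDeriv_one]

section combo

variable (a b : ℝ) (m n : ℕ)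

lemma hasDerivAt_combo (x : ℝ) :
    HasDerivAt (fun t => a * ee m t + b * ee n t) (a * ee' m x + b * ee' n x) x :=
  (((hasDerivAt_ee m x).const_mul a).add ((hasDerivAt_ee n x).const_mul b))

lemma deriv_combo : deriv (fun t => a * ee m t + b * ee n t) = fun x => a * ee' m x + b * ee' n x :=
  funext fun x => (hasDerivAt_combo a b m n x).deriv

lemma deriv2_combo : iteratedDeriv 2 (fun t => a * ee m t + b * ee n t)
    = fun t => (-(a * lam m)) * ee m t + (-(b * lam n)) * ee n t := by
  rw [iteratedDeriv_two, deriv_combo]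
  funext x
  have h := (((hasDerivAt_ee' m x).const_mul a).add ((hasDerivAt_ee' n x).const_mul b)).deriv
  rw [show (fun x => a * ee' m x + b * ee' n x) = ((fun y => a * ee' m y) + fun y => b * ee' n y) from rfl, h]; ring

lemma deriv4_combo : iteratedDeriv 4 (fun t => a * ee m t + b * ee n t)
    = fun t => (a * lam m ^ 2) * ee m t + (b * lam n ^ 2) * ee n t := by
  rw [iteratedDeriv_four, deriv2_combo, deriv2_combo]
  funext x; ring

lemma contDiff_combo : ContDiff ℝ 4 (fun t => a * ee m t + b * ee n t) :=
  (contDiff_const.mul (ee_contDiff m)).add (contDiff_const.mul (ee_contDiff n))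

lemma energy_combo (hm : 0 < m) (hn : 0 < n) (hmn : m ≠ n) :
    energy (fun t => a * ee m t + b * ee n t) = a ^ 2 * lam m + b ^ 2 * lam n := by
  have s2 : Real.sqrt 2 * Real.sqrt 2 = 2 := Real.mul_self_sqrt (by norm_num)
  have key : ∀ s : ℝ, (a * ee' m s + b * ee' n s) ^ 2
      = 2*a^2*((m:ℝ)*π)^2 * (Real.cos ((m:ℝ)*π*s) * Real.cos ((m:ℝ)*π*s))
      + 2*b^2*((n:ℝ)*π)^2 * (Real.cos ((n:ℝ)*π*s) * Real.cos ((n:ℝ)*π*s))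
      + 4*a*b*(((m:ℝ)*π)*((n:ℝ)*π)) * (Real.cos ((m:ℝ)*π*s) * Real.cos ((n:ℝ)*π*s)) := by
    intro s
    simp only [ee']
    linear_combination (a*((m:ℝ)*π)*Real.cos ((m:ℝ)*π*s) + b*((n:ℝ)*π)*Real.cos ((n:ℝ)*π*s))^2 * s2
  have hcont : ∀ c : ℕ, Continuous fun t : ℝ => Real.cos ((c:ℝ) * π * t) :=
    fun c => Real.continuous_cos.comp (by continuity)
  have hint : ∀ p q : ℕ, IntervalIntegrable (fun s : ℝ => Real.cos ((p:ℝ)*π*s) * Real.cos ((q:ℝ)*π*s)) volume 0 1 :=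
    fun p q => ((hcont p).mul (hcont q)).intervalIntegrable _ _
  rw [energy, deriv_combo]
  rw [intervalIntegral.integral_congr (g := fun s =>
      2*a^2*((m:ℝ)*π)^2 * (Real.cos ((m:ℝ)*π*s) * Real.cos ((m:ℝ)*π*s))
      + 2*b^2*((n:ℝ)*π)^2 * (Real.cos ((n:ℝ)*π*s) * Real.cos ((n:ℝ)*π*s))
      + 4*a*b*(((m:ℝ)*π)*((n:ℝ)*π)) * (Real.cos ((m:ℝ)*π*s) * Real.cos ((n:ℝ)*π*s))) (fun s _ => key s)]
  rw [intervalIntegral.integral_add (((hint m m).const_mul _).add ((hint n n).const_mul _)) ((hint m n).const_mul _),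
      intervalIntegral.integral_add ((hint m m).const_mul _) ((hint n n).const_mul _),
      intervalIntegral.integral_const_mul, intervalIntegral.integral_const_mul,
      intervalIntegral.integral_const_mul,
      integral_coscos m m hm hm, integral_coscos n n hn hn, integral_coscos m n hm hn]
  simp only [if_pos rfl, if_neg hmn, lam]
  norm_num
  ring

lemma combo_bc : (fun t => a * ee m t + b * ee n t) 0 = 0 ∧ (fun t => a * ee m t + b * ee n t) 1 = 0 := by
  simp [ee_zero, ee_one]

end combo

lemma integral_vanish {g : ℝ → ℝ} (h : ∀ x ∈ Set.Icc (0:ℝ) 1, g x = 0) :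
    ∫ t in (0:ℝ)..1, g t = 0 := by
  rw [intervalIntegral.integral_congr (g := fun _ => (0:ℝ))
    (fun t ht => h t (by rwa [Set.uIcc_of_le (by norm_num : (0:ℝ) ≤ 1)] at ht))]
  simp

/-- extraction: if A·ee m + B·ee n vanishes on [0,1] (m ≠ n, both positive) then A = 0 and B = 0 -/
lemma coeffs_vanish {A B : ℝ} {m n : ℕ} (hm : 0 < m) (hn : 0 < n) (hmn : m ≠ n)
    (h : ∀ x ∈ Set.Icc (0:ℝ) 1, A * ee m x + B * ee n x = 0) : A = 0 ∧ B = 0 := by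
  have hint : ∀ p q : ℕ, IntervalIntegrable (fun t : ℝ => ee p t * ee q t) volume 0 1 :=
    fun p q => ((ee_cont p).mul (ee_cont q)).intervalIntegrable _ _
  have key : ∀ p : ℕ, 0 < p → (∫ t in (0:ℝ)..1, (A * ee m t + B * ee n t) * ee p t)
      = A * (if m = p then 1 else 0) + B * (if n = p then 1 else 0) := by
    intro p hp
    have : ∀ t : ℝ, (A * ee m t + B * ee n t) * ee p t = A * (ee m t * ee p t) + B * (ee n t * ee p t) := by
      intro t; ring
    rw [intervalIntegral.integral_congr (g := fun t => A * (ee m t * ee p t) + B * (ee n t * ee p t)) (fun t _ => this t)]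
    rw [intervalIntegral.integral_add ((hint m p).const_mul _) ((hint n p).const_mul _),
        intervalIntegral.integral_const_mul, intervalIntegral.integral_const_mul,
        integral_ee_ee m p hm hp, integral_ee_ee n p hn hp]
  have hA := key m hm
  have hB := key n hn
  rw [integral_vanish (fun x hx => by rw [h x hx]; ring)] at hA hB
  rw [if_neg (fun hq : n = m => hmn hq.symm)] at hA
  rw [if_neg hmn, if_pos rfl] at hB
  simp at hA hB
  exact ⟨hA.symm, hB.symm⟩

lemma sbsol_combo_iff (β ϱ k : ℝ) (a b : ℝ) (m n : ℕ) (hm : 0 < m) (hn : 0 < n) (hmn : m ≠ n) :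
    SBSol β ϱ k (fun t => a * ee m t + b * ee n t) ↔
      ((lam m ^ 2 + (β + ϱ * (a ^ 2 * lam m + b ^ 2 * lam n)) * lam m + k) * a = 0 ∧
       (lam n ^ 2 + (β + ϱ * (a ^ 2 * lam m + b ^ 2 * lam n)) * lam n + k) * b = 0) := by
  set C : ℝ := β + ϱ * (a ^ 2 * lam m + b ^ 2 * lam n) with hC
  have hE : β + ϱ * energy (fun t => a * ee m t + b * ee n t) = C := by
    rw [energy_combo a b m n hm hn hmn]
  have hres : ∀ x : ℝ, iteratedDeriv 4 (fun t => a * ee m t + b * ee n t) x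
      - C * iteratedDeriv 2 (fun t => a * ee m t + b * ee n t) x
      + k * (a * ee m x + b * ee n x)
      = (lam m ^ 2 + C * lam m + k) * a * ee m x + (lam n ^ 2 + C * lam n + k) * b * ee n x := by
    intro x
    rw [deriv4_combo, deriv2_combo]
    ring
  constructor
  · rintro ⟨_, hode, _⟩
    have h0 : ∀ x ∈ Set.Icc (0:ℝ) 1,
        (lam m ^ 2 + C * lam m + k) * a * ee m x + (lam n ^ 2 + C * lam n + k) * b * ee n x = 0 := by
      intro x hx
      rw [← hres x]
      have := hode x hx
      rw [hE] at this
      exact this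
    exact coeffs_vanish hm hn hmn h0
  · rintro ⟨h1, h2⟩
    refine ⟨contDiff_combo a b m n, ?_, ?_, ?_, ?_, ?_⟩
    · intro x hx
      rw [hE, hres x]
      linear_combination ee m x * h1 + ee n x * h2
    · simp [ee_zero]
    · simp [ee_one]
    · rw [deriv2_combo]; simp [ee_zero]
    · rw [deriv2_combo]; simp [ee_one]

lemma part2 (β ϱ k : ℝ) (hϱ : 0 < ϱ) (hk : 0 < k) (n : ℕ) (hn : 0 < n) (α : ℝ) (hα : α ≠ 0) :
    SBSol β ϱ k (fun t => α * ee n t) ↔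
      (k / lam n + lam n < -β ∧ α ^ 2 = (-β - k / lam n - lam n) / (ϱ * lam n)) := by
  have hfe : (fun t => α * ee n t) = (fun t => α * ee n t + 0 * ee (n+1) t) := by
    funext t; ring
  have hL : 0 < lam n := lam_pos hn
  have hϱL : 0 < ϱ * lam n := mul_pos hϱ hL
  have hα2 : 0 < α ^ 2 := by positivity
  rw [hfe, sbsol_combo_iff β ϱ k α 0 n (n+1) hn (Nat.succ_pos n) (by omega)]
  have triv : (lam (n+1) ^ 2 + (β + ϱ * (α ^ 2 * lam n + 0 ^ 2 * lam (n+1))) * lam (n+1) + k) * 0 = 0 := by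
    ring
  rw [triv]
  simp only [and_true, eq_self_iff_true]
  constructor
  · intro h
    have h' : lam n ^ 2 + (β + ϱ * α ^ 2 * lam n) * lam n + k = 0 := by
      rcases mul_eq_zero.mp h with h1 | h1
      · linear_combination h1
      · exact absurd h1 hα
    have hneg : lam n ^ 2 + β * lam n + k < 0 := by nlinarith [mul_pos (mul_pos hϱ hα2) (mul_pos hL hL)]
    constructor
    · have e : k / lam n + lam n + β = (k + lam n ^ 2 + β * lam n) / lam n := by
        field_simp
      have : (k + lam n ^ 2 + β * lam n) / lam n < 0 :=
        div_neg_of_neg_of_pos (by linarith) hL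
      linarith [e ▸ this]
    · rw [eq_div_iff (ne_of_gt hϱL)]
      have e2 : k / lam n * lam n = k := div_mul_cancel₀ k (ne_of_gt hL)
      field_simp
      nlinarith [h']
  · rintro ⟨hlt, heq⟩
    have h2 : α ^ 2 * (ϱ * lam n) = -β - k / lam n - lam n := by
      rw [heq, div_mul_cancel₀ _ (ne_of_gt hϱL)]
    have h3 : k / lam n * lam n = k := div_mul_cancel₀ k (ne_of_gt hL)
    have h4 : α ^ 2 * (ϱ * lam n) * lam n = (-β - k / lam n - lam n) * lam n := by rw [h2]
    apply mul_eq_zero.mpr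
    left
    nlinarith [h4, h3]

lemma part3 (β ϱ k : ℝ) (hϱ : 0 < ϱ) (hk : 0 < k) (n₁ n₂ : ℕ) (h1 : 0 < n₁) (h12 : n₁ < n₂)
    (x y : ℝ) (hx : x ≠ 0) (hy : y ≠ 0) :
    SBSol β ϱ k (fun t => x * ee n₁ t + y * ee n₂ t) ↔
      (lam n₁ * lam n₂ = k ∧
        ϱ * x ^ 2 * lam n₁ + ϱ * y ^ 2 * lam n₂ + lam n₁ + lam n₂ + β = 0) := by
  have h2 : 0 < n₂ := lt_trans h1 h12
  have hne : n₁ ≠ n₂ := Nat.ne_of_lt h12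
  have hLne : lam n₁ ≠ lam n₂ := fun h => hne (lam_inj h)
  rw [sbsol_combo_iff β ϱ k x y n₁ n₂ h1 h2 hne]
  constructor
  · rintro ⟨hq1, hq2⟩
    have hQ1 : lam n₁ ^ 2 + (β + ϱ * (x ^ 2 * lam n₁ + y ^ 2 * lam n₂)) * lam n₁ + k = 0 := by
      rcases mul_eq_zero.mp hq1 with h | h
      · exact h
      · exact absurd h hx
    have hQ2 : lam n₂ ^ 2 + (β + ϱ * (x ^ 2 * lam n₁ + y ^ 2 * lam n₂)) * lam n₂ + k = 0 := by
      rcases mul_eq_zero.mp hq2 with h | h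
      · exact h
      · exact absurd h hy
    have hfac : (lam n₁ - lam n₂) * (lam n₁ + lam n₂ + (β + ϱ * (x ^ 2 * lam n₁ + y ^ 2 * lam n₂))) = 0 := by
      linear_combination hQ1 - hQ2
    have hsum : lam n₁ + lam n₂ + (β + ϱ * (x ^ 2 * lam n₁ + y ^ 2 * lam n₂)) = 0 := by
      rcases mul_eq_zero.mp hfac with h | h
      · exact absurd (sub_eq_zero.mp h) hLne
      · exact h
    constructor
    · linear_combination lam n₁ * hsum - hQ1
    · linear_combination hsum
  · rintro ⟨hprod, hsum⟩
    constructor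
    · apply mul_eq_zero.mpr; left
      linear_combination lam n₁ * hsum - hprod
    · apply mul_eq_zero.mpr; left
      linear_combination lam n₂ * hsum - hprod

lemma deriv_contDiff_of {f : ℝ → ℝ} {m : ℕ} (h : ContDiff ℝ ((m:ℕ∞)+1) f) : ContDiff ℝ m (deriv f) := by
  have := contDiff_succ_iff_deriv.mp (by exact_mod_cast h : ContDiff ℝ ((m : WithTop ℕ∞) + 1) f)
  exact this.2.2

lemma ee'_cont (n : ℕ) : Continuous (ee' n) :=
  continuous_const.mul (continuous_const.mul (Real.continuous_cos.comp (by continuity)))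

lemma ibp (f : ℝ → ℝ) (hf : ContDiff ℝ 2 f) (h0 : f 0 = 0) (h1 : f 1 = 0) (n : ℕ) :
    ∫ t in (0:ℝ)..1, iteratedDeriv 2 f t * ee n t = -lam n * ∫ t in (0:ℝ)..1, f t * ee n t := by
  have hdf : ContDiff ℝ 1 (deriv f) := deriv_contDiff_of (by exact_mod_cast hf)
  have hdiff : Differentiable ℝ f := hf.differentiable (by norm_num)
  have hddf : Continuous (deriv (deriv f)) := hdf.continuous_deriv le_rfl
  have hdfc : Continuous (deriv f) := hdf.continuous
  have hu : ∀ x ∈ Set.uIcc (0:ℝ) 1, HasDerivAt (ee n) (ee' n x) x := fun x _ => hasDerivAt_ee n x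
  have hv : ∀ x ∈ Set.uIcc (0:ℝ) 1, HasDerivAt (deriv f) (deriv (deriv f) x) x :=
    fun x _ => ((hdf.differentiable one_ne_zero) x).hasDerivAt
  have step1 : ∫ t in (0:ℝ)..1, ee n t * deriv (deriv f) t
      = ee n 1 * deriv f 1 - ee n 0 * deriv f 0 - ∫ t in (0:ℝ)..1, ee' n t * deriv f t :=
    intervalIntegral.integral_mul_deriv_eq_deriv_mul hu hv
      ((ee'_cont n).intervalIntegrable _ _) (hddf.intervalIntegrable _ _)
  have hu2 : ∀ x ∈ Set.uIcc (0:ℝ) 1, HasDerivAt (ee' n) (-lam n * ee n x) x := fun x _ => hasDerivAt_ee' n x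
  have hv2 : ∀ x ∈ Set.uIcc (0:ℝ) 1, HasDerivAt f (deriv f x) x := fun x _ => (hdiff x).hasDerivAt
  have step2 : ∫ t in (0:ℝ)..1, ee' n t * deriv f t
      = ee' n 1 * f 1 - ee' n 0 * f 0 - ∫ t in (0:ℝ)..1, (-lam n * ee n t) * f t :=
    intervalIntegral.integral_mul_deriv_eq_deriv_mul hu2 hv2
      (((continuous_const.mul (ee_cont n))).intervalIntegrable _ _) (hdfc.intervalIntegrable _ _)
  have e1 : ∫ t in (0:ℝ)..1, iteratedDeriv 2 f t * ee n t
      = ∫ t in (0:ℝ)..1, ee n t * deriv (deriv f) t := by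
    rw [iteratedDeriv_two]
    exact intervalIntegral.integral_congr (fun t _ => mul_comm _ _)
  have e2 : ∫ t in (0:ℝ)..1, (-lam n * ee n t) * f t = -lam n * ∫ t in (0:ℝ)..1, f t * ee n t := by
    rw [← intervalIntegral.integral_const_mul]
    exact intervalIntegral.integral_congr (fun t _ => by ring)
  rw [e1, step1, step2, e2, ee_zero, ee_one, h0, h1]
  ring

lemma coeff_eq (β ϱ k : ℝ) (u : ℝ → ℝ) (hu : SBSol β ϱ k u) (p : ℕ) :
    (lam p ^ 2 + (β + ϱ * energy u) * lam p + k) * (∫ t in (0:ℝ)..1, u t * ee p t) = 0 := by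
  obtain ⟨hC4, hode, h0, h1, h20, h21⟩ := hu
  set C := β + ϱ * energy u with hC
  have hC2 : ContDiff ℝ 2 u := hC4.of_le (by norm_num)
  have hC2' : ContDiff ℝ 2 (iteratedDeriv 2 u) := by
    rw [iteratedDeriv_two]
    exact deriv_contDiff_of (by exact_mod_cast deriv_contDiff_of (by exact_mod_cast hC4))
  have hI2 : ∫ t in (0:ℝ)..1, iteratedDeriv 2 u t * ee p t
      = -lam p * ∫ t in (0:ℝ)..1, u t * ee p t := ibp u hC2 h0 h1 p
  have hI4 : ∫ t in (0:ℝ)..1, iteratedDeriv 4 u t * ee p t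
      = lam p ^ 2 * ∫ t in (0:ℝ)..1, u t * ee p t := by
    have e4 : ∀ t : ℝ, iteratedDeriv 4 u t = iteratedDeriv 2 (iteratedDeriv 2 u) t := by
      rw [iteratedDeriv_four u]; exact fun t => rfl
    calc ∫ t in (0:ℝ)..1, iteratedDeriv 4 u t * ee p t
        = ∫ t in (0:ℝ)..1, iteratedDeriv 2 (iteratedDeriv 2 u) t * ee p t :=
          intervalIntegral.integral_congr (fun t _ => by rw [e4 t])
      _ = -lam p * ∫ t in (0:ℝ)..1, iteratedDeriv 2 u t * ee p t := ibp _ hC2' h20 h21 p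
      _ = -lam p * (-lam p * ∫ t in (0:ℝ)..1, u t * ee p t) := by rw [hI2]
      _ = lam p ^ 2 * ∫ t in (0:ℝ)..1, u t * ee p t := by ring
  have hcu : Continuous u := hC4.continuous
  have hc2 : Continuous (iteratedDeriv 2 u) := hC2'.continuous
  have hc4 : Continuous (iteratedDeriv 4 u) := by
    have hC2'' : ContDiff ℝ 2 (deriv (deriv u)) := by rw [← iteratedDeriv_two]; exact hC2'
    have hdg : ContDiff ℝ 1 (deriv (deriv (deriv u))) := deriv_contDiff_of (by exact_mod_cast hC2'')
    rw [iteratedDeriv_four u, iteratedDeriv_two, iteratedDeriv_two]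
    exact hdg.continuous_deriv le_rfl
  have hzero : ∫ t in (0:ℝ)..1, (iteratedDeriv 4 u t - C * iteratedDeriv 2 u t + k * u t) * ee p t = 0 :=
    integral_vanish (fun t ht => by rw [hode t ht]; ring)
  have hsplit : ∫ t in (0:ℝ)..1, (iteratedDeriv 4 u t - C * iteratedDeriv 2 u t + k * u t) * ee p t
      = (∫ t in (0:ℝ)..1, iteratedDeriv 4 u t * ee p t)
        - C * (∫ t in (0:ℝ)..1, iteratedDeriv 2 u t * ee p t)
        + k * (∫ t in (0:ℝ)..1, u t * ee p t) := by
    have i4 : IntervalIntegrable (fun t => iteratedDeriv 4 u t * ee p t) volume 0 1 :=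
      (hc4.mul (ee_cont p)).intervalIntegrable _ _
    have i2 : IntervalIntegrable (fun t => C * (iteratedDeriv 2 u t * ee p t)) volume 0 1 :=
      ((hc2.mul (ee_cont p)).intervalIntegrable _ _).const_mul _
    have i0 : IntervalIntegrable (fun t => k * (u t * ee p t)) volume 0 1 :=
      ((hcu.mul (ee_cont p)).intervalIntegrable _ _).const_mul _
    rw [intervalIntegral.integral_congr
      (g := fun t => iteratedDeriv 4 u t * ee p t - C * (iteratedDeriv 2 u t * ee p t) + k * (u t * ee p t))
      (fun t _ => by ring)]
    rw [intervalIntegral.integral_add ((i4.sub i2)) i0, intervalIntegral.integral_sub i4 i2,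
        intervalIntegral.integral_const_mul, intervalIntegral.integral_const_mul]
  rw [hsplit, hI4, hI2] at hzero
  linear_combination hzero

lemma integral_symm_odd {g : ℝ → ℝ} (hg : Continuous g) (hodd : ∀ t, g (-t) = - g t) :
    ∫ t in (-1:ℝ)..1, g t = 0 := by
  have hsplit : (∫ t in (-1:ℝ)..0, g t) + ∫ t in (0:ℝ)..1, g t = ∫ t in (-1:ℝ)..1, g t :=
    intervalIntegral.integral_add_adjacent_intervals (hg.intervalIntegrable _ _) (hg.intervalIntegrable _ _)
  have h1 : ∫ t in (-1:ℝ)..0, g t = ∫ t in (0:ℝ)..1, g (-t) := by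
    rw [intervalIntegral.integral_comp_neg]
    norm_num
  have h2 : ∫ t in (0:ℝ)..1, g (-t) = - ∫ t in (0:ℝ)..1, g t := by
    rw [← intervalIntegral.integral_neg]
    exact intervalIntegral.integral_congr (fun t _ => hodd t)
  rw [← hsplit, h1, h2]
  ring

lemma integral_symm_even {g : ℝ → ℝ} (hg : Continuous g) (heven : ∀ t, g (-t) = g t) :
    ∫ t in (-1:ℝ)..1, g t = 2 * ∫ t in (0:ℝ)..1, g t := by
  have hsplit : (∫ t in (-1:ℝ)..0, g t) + ∫ t in (0:ℝ)..1, g t = ∫ t in (-1:ℝ)..1, g t :=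
    intervalIntegral.integral_add_adjacent_intervals (hg.intervalIntegrable _ _) (hg.intervalIntegrable _ _)
  have h1 : ∫ t in (-1:ℝ)..0, g t = ∫ t in (0:ℝ)..1, g (-t) := by
    rw [intervalIntegral.integral_comp_neg]
    norm_num
  have h2 : ∫ t in (0:ℝ)..1, g (-t) = ∫ t in (0:ℝ)..1, g t :=
    intervalIntegral.integral_congr (fun t _ => heven t)
  rw [← hsplit, h1, h2]
  ring

lemma sine_complete {f : ℝ → ℝ} (hf : Continuous f) (h0 : f 0 = 0) (h1 : f 1 = 0)
    (horth : ∀ p : ℕ, 0 < p → ∫ t in (0:ℝ)..1, f t * Real.sin ((p:ℝ) * π * t) = 0) :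
    ∀ t ∈ Set.Icc (0:ℝ) 1, f t = 0 := by
  classical
  haveI : Fact ((0:ℝ) < 2) := ⟨by norm_num⟩
  set h : ℝ → ℝ := fun t => if t ≤ 0 then -f (-t) else f t with hh_def
  have hh : Continuous h := by
    apply Continuous.if_le ((hf.comp continuous_neg).neg) hf continuous_id continuous_const
    intro x hx
    have hx0 : x = 0 := hx
    subst hx0
    simp [h0]
  have hagree : ∀ t : ℝ, 0 ≤ t → h t = f t := by
    intro t ht
    by_cases h' : t ≤ 0
    · have : t = 0 := le_antisymm h' ht
      simp [hh_def, this, h0]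
    · simp [hh_def, h']
  have hodd : ∀ t : ℝ, h (-t) = - h t := by
    intro t
    rcases lt_trichotomy t 0 with ht | ht | ht
    · have h1' : ¬ (-t ≤ 0) := by linarith
      simp [hh_def, if_neg h1', if_pos ht.le]
    · simp [hh_def, ht, h0]
    · have h1' : (-t) ≤ 0 := by linarith
      have h2' : ¬ (t ≤ 0) := by linarith
      simp [hh_def, if_pos h1', if_neg h2']
  -- orthogonality of h against sin (j π t) on [0,1] for all j : ℤ
  have horthZ : ∀ j : ℤ, ∫ t in (0:ℝ)..1, h t * Real.sin ((j:ℝ) * π * t) = 0 := by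
    intro j
    have congr01 : ∀ (c : ℝ), ∫ t in (0:ℝ)..1, h t * Real.sin (c * t) = ∫ t in (0:ℝ)..1, f t * Real.sin (c * t) := by
      intro c
      apply intervalIntegral.integral_congr
      intro t ht
      rw [Set.uIcc_of_le (by norm_num : (0:ℝ) ≤ 1)] at ht
      show h t * Real.sin (c * t) = f t * Real.sin (c * t)
      rw [hagree t ht.1]
    rcases lt_trichotomy j 0 with hj | hj | hj
    · have hcast : ((((-j).toNat : ℕ)) : ℝ) = -(j : ℝ) := by
        have h' : (((-j).toNat : ℕ) : ℤ) = -j := Int.toNat_of_nonneg (by omega)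
        exact_mod_cast congrArg (Int.cast : ℤ → ℝ) h'
      have e : ∫ t in (0:ℝ)..1, h t * Real.sin ((j:ℝ) * π * t)
          = - ∫ t in (0:ℝ)..1, h t * Real.sin ((((-j).toNat : ℕ) : ℝ) * π * t) := by
        rw [← intervalIntegral.integral_neg]
        apply intervalIntegral.integral_congr
        intro t _
        show h t * Real.sin ((j:ℝ) * π * t) = -(h t * Real.sin ((((-j).toNat : ℕ) : ℝ) * π * t))
        rw [hcast, show -(j:ℝ) * π * t = -((j:ℝ) * π * t) by ring, Real.sin_neg]
        ring
      rw [e, congr01, horth (-j).toNat (by omega), neg_zero]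
    · subst hj; simp
    · have hcast : (((j.toNat : ℕ)) : ℝ) = (j : ℝ) := by
        have h' : (((j.toNat : ℕ)) : ℤ) = j := Int.toNat_of_nonneg (by omega)
        exact_mod_cast congrArg (Int.cast : ℤ → ℝ) h'
      rw [congr01, show (j:ℝ) = ((j.toNat : ℕ) : ℝ) from hcast.symm, horth j.toNat (by omega)]
  -- build the odd 2-periodic extension on the circle
  set hc : ℝ → ℂ := fun t => (h t : ℂ) with hc_def
  have hc_cont : Continuous hc := Complex.continuous_ofReal.comp hh
  have hh1 : h 1 = 0 := by rw [hagree 1 (by norm_num), h1]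
  have hhm1 : h (-1) = 0 := by rw [hodd 1, hh1, neg_zero]
  have hend : hc (-1) = hc (-1 + 2) := by
    have : (-1:ℝ) + 2 = 1 := by norm_num
    rw [this, hc_def]
    simp [hh1, hhm1]
  set G : C(AddCircle 2, ℂ) :=
    ⟨AddCircle.liftIco 2 (-1) hc, AddCircle.liftIco_continuous hend hc_cont.continuousOn⟩ with hG_def
  have hker : ∀ i : ℤ, fourierCoeff (⇑G) i = 0 := by
    intro i
    have hcoe : fourierCoeff (⇑G) i = fourierCoeffOn (lt_add_of_pos_right (-1) (by norm_num : (0:ℝ) < 2)) hc i := by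
      exact fourierCoeff_liftIco_eq hc i
    rw [hcoe, fourierCoeffOn_eq_integral]
    have key : ∀ x : ℝ, fourier (T := ((-1 + 2) - (-1) : ℝ)) (-i) ↑x • hc x
        = ((h x * Real.cos ((i:ℝ)*π*x) : ℝ) : ℂ) - ((h x * Real.sin ((i:ℝ)*π*x) : ℝ) : ℂ) * Complex.I := by
      intro x
      rw [fourier_coe_apply]
      have harg : 2 * ↑π * Complex.I * ↑(-i) * ↑x / ↑((-1 + 2) - (-1) : ℝ)
          = ((-( (i:ℝ) * π * x) : ℝ) : ℂ) * Complex.I := by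
        push_cast
        have : ((-1:ℂ) + 2) - (-1) = 2 := by norm_num
        rw [this]
        ring
      rw [harg, Complex.exp_mul_I, ← Complex.ofReal_cos, ← Complex.ofReal_sin,
        Real.cos_neg, Real.sin_neg, smul_eq_mul]
      push_cast
      ring
    rw [intervalIntegral.integral_congr (g := fun x =>
        ((h x * Real.cos ((i:ℝ)*π*x) : ℝ) : ℂ) - ((h x * Real.sin ((i:ℝ)*π*x) : ℝ) : ℂ) * Complex.I)
      (fun x _ => key x)]
    have hlim : ((-1:ℝ) + 2) = 1 := by norm_num
    rw [hlim]
    have hcos : Continuous fun x : ℝ => h x * Real.cos ((i:ℝ)*π*x) :=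
      hh.mul (Real.continuous_cos.comp (by continuity))
    have hsin : Continuous fun x : ℝ => h x * Real.sin ((i:ℝ)*π*x) :=
      hh.mul (Real.continuous_sin.comp (by continuity))
    have hic : IntervalIntegrable (fun x : ℝ => ((h x * Real.cos ((i:ℝ)*π*x) : ℝ) : ℂ)) volume (-1) 1 :=
      (Complex.continuous_ofReal.comp hcos).intervalIntegrable _ _
    have his : IntervalIntegrable (fun x : ℝ => ((h x * Real.sin ((i:ℝ)*π*x) : ℝ) : ℂ) * Complex.I) volume (-1) 1 :=
      ((Complex.continuous_ofReal.comp hsin).mul continuous_const).intervalIntegrable _ _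
    rw [intervalIntegral.integral_sub hic his]
    rw [intervalIntegral.integral_mul_const, intervalIntegral.integral_ofReal,
        intervalIntegral.integral_ofReal]
    have hodd1 : ∫ x in (-1:ℝ)..1, h x * Real.cos ((i:ℝ)*π*x) = 0 := by
      apply integral_symm_odd hcos
      intro t
      rw [hodd t, show (i:ℝ)*π*(-t) = -((i:ℝ)*π*t) by ring, Real.cos_neg]
      ring
    have heven1 : ∫ x in (-1:ℝ)..1, h x * Real.sin ((i:ℝ)*π*x) = 0 := by
      rw [integral_symm_even hsin (fun t => by
        rw [hodd t, show (i:ℝ)*π*(-t) = -((i:ℝ)*π*t) by ring, Real.sin_neg]; ring)]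
      rw [horthZ i, mul_zero]
    rw [hodd1, heven1]
    simp
  have hG0 : G = 0 := by
    have hsummable : Summable (fun i => fourierCoeff (⇑G) i) := by
      simp only [hker]; exact summable_zero
    have hs := hasSum_fourier_series_of_summable (T := 2) (f := G) hsummable
    simp only [hker, zero_smul] at hs
    exact hs.unique hasSum_zero
  intro t ht
  rcases eq_or_lt_of_le ht.2 with h1t | h1t
  · rw [h1t, h1]
  · have hmem : t ∈ Set.Ico (-1:ℝ) (-1 + 2) := ⟨by linarith [ht.1], by linarith⟩
    have hlift : AddCircle.liftIco 2 (-1) hc ↑t = hc t := AddCircle.liftIco_coe_apply hmem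
    have hGt := hlift
    rw [show AddCircle.liftIco 2 (-1) hc = ⇑G from rfl, hG0] at hGt
    have hc0 : hc t = 0 := by simpa using hGt.symm
    have hht : h t = 0 := by
      have : (h t : ℂ) = 0 := hc0
      exact_mod_cast this
    rw [← hagree t ht.1, hht]

lemma part1 (β ϱ k : ℝ) (u : ℝ → ℝ) (hu : SBSol β ϱ k u) :
    ∃ n₁ n₂ : ℕ, 0 < n₁ ∧ n₁ < n₂ ∧ ∃ x y : ℝ,
      ∀ t ∈ Set.Icc (0:ℝ) 1, u t = x * ee n₁ t + y * ee n₂ t := by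
  classical
  set C := β + ϱ * energy u with hC
  set b : ℕ → ℝ := fun p => ∫ t in (0:ℝ)..1, u t * ee p t with hb
  have hcoeff : ∀ p : ℕ, (lam p ^ 2 + C * lam p + k) * b p = 0 := fun p => coeff_eq β ϱ k u hu p
  have hroot : ∀ m : ℕ, b m ≠ 0 → lam m ^ 2 + C * lam m + k = 0 := by
    intro m hm
    rcases mul_eq_zero.mp (hcoeff m) with h | h
    · exact h
    · exact absurd h hm
  have htriple : ∀ m p q : ℕ, m ≠ p → q ≠ m → q ≠ p → b m ≠ 0 → b p ≠ 0 → b q = 0 := by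
    intro m p q hmp hqm hqp hbm hbp
    by_contra hbq
    have h1 := hroot m hbm
    have h2 := hroot p hbp
    have h3 := hroot q hbq
    have hmp' : lam m ≠ lam p := fun h => hmp (lam_inj h)
    have hqm' : lam q ≠ lam m := fun h => hqm (lam_inj h)
    have hqp' : lam q ≠ lam p := fun h => hqp (lam_inj h)
    have e1 : (lam m - lam p) * (lam m + lam p + C) = 0 := by linear_combination h1 - h2
    have e2 : (lam m - lam q) * (lam m + lam q + C) = 0 := by linear_combination h1 - h3
    have s1 : lam m + lam p + C = 0 := by
      rcases mul_eq_zero.mp e1 with h | h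
      · exact absurd (sub_eq_zero.mp h) hmp'
      · exact h
    have s2 : lam m + lam q + C = 0 := by
      rcases mul_eq_zero.mp e2 with h | h
      · exact absurd (sub_eq_zero.mp h).symm hqm'
      · exact h
    exact hqp' (by linarith)
  have htwo : ∃ n₁ n₂ : ℕ, 0 < n₁ ∧ n₁ < n₂ ∧ ∀ m : ℕ, 0 < m → b m ≠ 0 → (m = n₁ ∨ m = n₂) := by
    by_cases hex2 : ∃ m p : ℕ, 0 < m ∧ m < p ∧ b m ≠ 0 ∧ b p ≠ 0
    · obtain ⟨m, p, hm, hmp, hbm, hbp⟩ := hex2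
      refine ⟨m, p, hm, hmp, ?_⟩
      intro q hq hbq
      by_contra hcon
      push_neg at hcon
      exact hbq (htriple m p q (Nat.ne_of_lt hmp) hcon.1 hcon.2 hbm hbp)
    · push_neg at hex2
      by_cases hex1 : ∃ m : ℕ, 0 < m ∧ b m ≠ 0
      · obtain ⟨m, hm, hbm⟩ := hex1
        refine ⟨m, m + 1, hm, Nat.lt_succ_self m, ?_⟩
        intro q hq hbq
        left
        by_contra hqm
        rcases lt_or_gt_of_ne hqm with h | h
        · exact hbm (hex2 q m hq h hbq)
        · exact hbq (hex2 m q hm h hbm)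
      · push_neg at hex1
        exact ⟨1, 2, by norm_num, by norm_num, fun q hq hbq => absurd (hex1 q hq) hbq⟩
  obtain ⟨n₁, n₂, hn1, hn12, hS⟩ := htwo
  have hn2 : 0 < n₂ := lt_trans hn1 hn12
  refine ⟨n₁, n₂, hn1, hn12, b n₁, b n₂, ?_⟩
  obtain ⟨hC4, hode, h0, h1, h20, h21⟩ := hu
  have hucont : Continuous u := hC4.continuous
  set v : ℝ → ℝ := fun t => u t - (b n₁ * ee n₁ t + b n₂ * ee n₂ t) with hv
  have hvcont : Continuous v :=
    hucont.sub ((continuous_const.mul (ee_cont n₁)).add (continuous_const.mul (ee_cont n₂)))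
  have hv0 : v 0 = 0 := by simp [hv, h0, ee_zero]
  have hv1 : v 1 = 0 := by simp [hv, h1, ee_one]
  have hint : ∀ p q : ℕ, IntervalIntegrable (fun t : ℝ => ee p t * ee q t) volume 0 1 :=
    fun p q => ((ee_cont p).mul (ee_cont q)).intervalIntegrable _ _
  have hvee : ∀ p : ℕ, 0 < p → ∫ t in (0:ℝ)..1, v t * ee p t = 0 := by
    intro p hp
    have hiu : IntervalIntegrable (fun t : ℝ => u t * ee p t) volume 0 1 :=
      (hucont.mul (ee_cont p)).intervalIntegrable _ _
    have split : ∫ t in (0:ℝ)..1, v t * ee p t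
        = b p - (b n₁ * (if n₁ = p then 1 else 0) + b n₂ * (if n₂ = p then 1 else 0)) := by
      have e : ∀ t : ℝ, v t * ee p t
          = u t * ee p t - (b n₁ * (ee n₁ t * ee p t) + b n₂ * (ee n₂ t * ee p t)) := by
        intro t; simp only [hv]; ring
      rw [intervalIntegral.integral_congr (g := fun t =>
          u t * ee p t - (b n₁ * (ee n₁ t * ee p t) + b n₂ * (ee n₂ t * ee p t))) (fun t _ => e t)]
      rw [intervalIntegral.integral_sub hiu (((hint n₁ p).const_mul _).add ((hint n₂ p).const_mul _)),
          intervalIntegral.integral_add ((hint n₁ p).const_mul _) ((hint n₂ p).const_mul _),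
          intervalIntegral.integral_const_mul, intervalIntegral.integral_const_mul,
          integral_ee_ee n₁ p hn1 hp, integral_ee_ee n₂ p hn2 hp]
    rw [split]
    rcases eq_or_ne n₁ p with h | h
    · subst h
      rw [if_pos rfl, if_neg (by omega : ¬ n₂ = n₁)]
      ring
    · rcases eq_or_ne n₂ p with h2 | h2
      · subst h2
        rw [if_pos rfl, if_neg h]
        ring
      · have hbp : b p = 0 := by
          by_contra hbp
          rcases hS p hp hbp with rfl | rfl
          · exact h rfl
          · exact h2 rfl
        rw [if_neg h, if_neg h2, hbp]
        ring
  have hvsin : ∀ p : ℕ, 0 < p → ∫ t in (0:ℝ)..1, v t * Real.sin ((p:ℝ) * π * t) = 0 := by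
    intro p hp
    have s2 : Real.sqrt 2 ≠ 0 := by positivity
    have e : ∀ t : ℝ, v t * Real.sin ((p:ℝ) * π * t) = (Real.sqrt 2)⁻¹ * (v t * ee p t) := by
      intro t
      rw [ee]
      field_simp
    rw [intervalIntegral.integral_congr (g := fun t => (Real.sqrt 2)⁻¹ * (v t * ee p t)) (fun t _ => e t),
        intervalIntegral.integral_const_mul, hvee p hp, mul_zero]
  have := sine_complete hvcont hv0 hv1 hvsin
  intro t ht
  have hvt := this t ht
  simp only [hv] at hvt
  linarith [hvt]

theorem stmt19 (β ϱ k : ℝ) (hϱ : 0 < ϱ) (hk : 0 < k) :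
    (∀ u : ℝ → ℝ, SBSol β ϱ k u →
      ∃ n₁ n₂ : ℕ, 0 < n₁ ∧ n₁ < n₂ ∧ ∃ x y : ℝ,
        ∀ t ∈ Set.Icc (0:ℝ) 1, u t = x * ee n₁ t + y * ee n₂ t) ∧
    (∀ n : ℕ, 0 < n → ∀ α : ℝ, α ≠ 0 →
      (SBSol β ϱ k (fun t => α * ee n t) ↔
        (k / lam n + lam n < -β ∧ α ^ 2 = (-β - k / lam n - lam n) / (ϱ * lam n)))) ∧
    (∀ n₁ n₂ : ℕ, 0 < n₁ → n₁ < n₂ → ∀ x y : ℝ, x ≠ 0 → y ≠ 0 →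
      (SBSol β ϱ k (fun t => x * ee n₁ t + y * ee n₂ t) ↔
        (lam n₁ * lam n₂ = k ∧
          ϱ * x ^ 2 * lam n₁ + ϱ * y ^ 2 * lam n₂ + lam n₁ + lam n₂ + β = 0))) := by
  exact ⟨fun u hu => part1 β ϱ k u hu,
    fun n hn α hα => part2 β ϱ k hϱ hk n hn α hα,
    fun n₁ n₂ h1 h12 x y hx hy => part3 β ϱ k hϱ hk n₁ n₂ h1 h12 x y hx hy⟩
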